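/- arXiv:2106.11590 — 3 statements merged into one kernel-verified Lean document; each statement's English description precedes it below -/
import Mathlib

section
/- Let d be an integer, n ≥ 1, and ε a complex number with complex conjugate ε̄. Consider the block-diagonal complex matrix B_L consisting of: one n×n tridiagonal block with diagonal entries -2d and off-diagonal entries d; n(n-1)/2 copies of the 2×2 block [[-2εε̄, -(ε+ε̄)], [-(ε+ε̄), -2]]; and n copies of the 2×2 block [[2εε̄, ε+ε̄], [ε+ε̄, 2]]. Then det B_L = (-d)^n · (n+1) · (4εε̄ - (ε+ε̄)²)^{n(n+1)/2}. -/
/-! The determinant of a block-diagonal matrix is the product of the determinants of its blocks.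
Each of the `n(n-1)/2 + n = n(n+1)/2` blocks of size two has determinant `4εε̄ - (ε+ε̄)²`.
Cofactor expansion along the first row gives the tridiagonal block with diagonal `a` and
off-diagonal `b` the recurrence `D (m+2) = a D (m+1) - b² D m`, whose solution for `a = -2c`,
`b = c` is `D m = (-c)^m (m+1)`. -/

open Matrix

/-- Sizes of the blocks: one block of size `n` and `k + n` blocks of size `2`. -/
def blkSize (n k : ℕ) : Fin 1 ⊕ Fin k ⊕ Fin n → Type
  | Sum.inl _ => Fin n
  | Sum.inr _ => Fin 2

instance blkSizeFintype (n k : ℕ) : ∀ i, Fintype (blkSize n k i)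
  | Sum.inl _ => inferInstanceAs (Fintype (Fin n))
  | Sum.inr _ => inferInstanceAs (Fintype (Fin 2))

instance blkSizeDecEq (n k : ℕ) : ∀ i, DecidableEq (blkSize n k i)
  | Sum.inl _ => inferInstanceAs (DecidableEq (Fin n))
  | Sum.inr _ => inferInstanceAs (DecidableEq (Fin 2))

/-- The blocks of the Gram matrix `B_L`: one `n × n` tridiagonal block with diagonal
entries `-2d` and off-diagonal entries `d`; `n(n-1)/2` copies of the block
`[[-2εε̄, -(ε+ε̄)], [-(ε+ε̄), -2]]`; and `n` copies of `[[2εε̄, ε+ε̄], [ε+ε̄, 2]]`. -/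
noncomputable def BLblocks (d : ℤ) (n : ℕ) (ε : ℂ) :
    (i : Fin 1 ⊕ Fin (n * (n - 1) / 2) ⊕ Fin n) →
      Matrix (blkSize n (n * (n - 1) / 2) i) (blkSize n (n * (n - 1) / 2) i) ℂ
  | Sum.inl _ => Matrix.of fun i j : Fin n =>
      if i = j then -2 * (d : ℂ)
      else if (i : ℕ) + 1 = (j : ℕ) ∨ (j : ℕ) + 1 = (i : ℕ) then (d : ℂ)
      else 0
  | Sum.inr (Sum.inl _) =>
      !![-2 * ε * (starRingEnd ℂ) ε, -(ε + (starRingEnd ℂ) ε);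
         -(ε + (starRingEnd ℂ) ε), -2]
  | Sum.inr (Sum.inr _) =>
      !![2 * ε * (starRingEnd ℂ) ε, ε + (starRingEnd ℂ) ε;
         ε + (starRingEnd ℂ) ε, 2]

namespace Matrix

theorem det_blockDiagonal' {ι : Type*} [Fintype ι] [DecidableEq ι] {m : ι → Type*}
    [∀ i, Fintype (m i)] [∀ i, DecidableEq (m i)] {R : Type*} [CommRing R]
    (M : ∀ i, Matrix (m i) (m i) R) : (blockDiagonal' M).det = ∏ i, (M i).det := by
  -- a block-diagonal matrix is block triangular for every linear order on the indices
  let _ : LinearOrder ι := LinearOrder.lift' _ (Fintype.equivFin ι).injective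
  rw [(blockTriangular_blockDiagonal' M).det_fintype]
  refine Finset.prod_congr rfl fun i _ => ?_
  rw [← det_reindex_self (Equiv.sigmaSubtype i)]
  congr
  ext a b
  exact blockDiagonal'_apply_eq M i a b

variable {R : Type*} [CommRing R]

def tridiagonal (a b : R) (m : ℕ) : Matrix (Fin m) (Fin m) R :=
  of fun i j => if i = j then a else if (i : ℕ) + 1 = j ∨ (j : ℕ) + 1 = i then b else 0

theorem tridiagonal_submatrix_succ (a b : R) (m : ℕ) :
    (tridiagonal a b (m + 1)).submatrix Fin.succ Fin.succ = tridiagonal a b m := by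
  ext i j
  simp [tridiagonal, Fin.ext_iff]

theorem det_tridiagonal_submatrix_succ_succAbove_one (a b : R) (m : ℕ) :
    ((tridiagonal a b (m + 2)).submatrix Fin.succ (Fin.succAbove 1)).det
      = b * (tridiagonal a b m).det := by
  have hminor : ((tridiagonal a b (m + 2)).submatrix Fin.succ (Fin.succAbove 1)).submatrix
      (Fin.succAbove 0) Fin.succ = tridiagonal a b m := by
    ext i j
    simp [tridiagonal, Fin.ext_iff, Fin.succAbove, Fin.lt_def]
  rw [det_succ_column_zero, Fin.sum_univ_succ, hminor]
  simp [tridiagonal, Fin.succAbove]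

theorem det_tridiagonal_succ_succ (a b : R) (m : ℕ) :
    (tridiagonal a b (m + 2)).det
      = a * (tridiagonal a b (m + 1)).det - b ^ 2 * (tridiagonal a b m).det := by
  rw [det_succ_row_zero, Fin.sum_univ_succ, Fin.sum_univ_succ, Fin.succAbove_zero,
    tridiagonal_submatrix_succ, Fin.succ_zero_eq_one, det_tridiagonal_submatrix_succ_succAbove_one]
  simp [tridiagonal, Fin.ext_iff]
  ring

theorem det_tridiagonal_neg_two_mul_self (c : R) :
    ∀ m : ℕ, (tridiagonal (-2 * c) c m).det = (-c) ^ m * (m + 1)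
  | 0 => by simp
  | 1 => by simp [tridiagonal]; ring
  | m + 2 => by
    rw [det_tridiagonal_succ_succ, det_tridiagonal_neg_two_mul_self c (m + 1),
      det_tridiagonal_neg_two_mul_self c m]
    push_cast
    ring

end Matrix

theorem det_BL_general (d : ℤ) (n : ℕ) (ε : ℂ) :
    (Matrix.blockDiagonal' (BLblocks d n ε)).det
      = (-(d : ℂ)) ^ n * (n + 1) *
        (4 * ε * (starRingEnd ℂ) ε - (ε + (starRingEnd ℂ) ε) ^ 2) ^ (n * (n + 1) / 2) := by
  have htri : (BLblocks d n ε (Sum.inl 0)).det = (tridiagonal (-2 * (d : ℂ)) d n).det := rfl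
  have hneg : ∀ j, (BLblocks d n ε (Sum.inr (Sum.inl j))).det
      = 4 * ε * (starRingEnd ℂ) ε - (ε + (starRingEnd ℂ) ε) ^ 2 :=
    fun _ => (det_fin_two_of _ _ _ _).trans (by ring)
  have hpos : ∀ j, (BLblocks d n ε (Sum.inr (Sum.inr j))).det
      = 4 * ε * (starRingEnd ℂ) ε - (ε + (starRingEnd ℂ) ε) ^ 2 :=
    fun _ => (det_fin_two_of _ _ _ _).trans (by ring)
  rw [det_blockDiagonal', Fintype.prod_sum_type, Fintype.prod_sum_type, Fin.prod_univ_one, htri,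
    det_tridiagonal_neg_two_mul_self]
  simp only [hneg, hpos, Finset.prod_const, Finset.card_univ, Fintype.card_fin, ← pow_add,
    ← Nat.triangle_succ, Nat.add_sub_cancel, mul_comm (n + 1) n]

/-- The determinant of the block-diagonal Gram matrix `B_L` equals
`(-d)^n · (n+1) · (4εε̄ - (ε+ε̄)²)^{n(n+1)/2}`. -/
theorem det_BL (d : ℤ) (n : ℕ) (hn : 1 ≤ n) (ε : ℂ) :
    (Matrix.blockDiagonal' (BLblocks d n ε)).det
      = (-(d : ℂ)) ^ n * (n + 1) *
        (4 * ε * (starRingEnd ℂ) ε - (ε + (starRingEnd ℂ) ε) ^ 2) ^ (n * (n + 1) / 2) :=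
  det_BL_general d n ε
end

section
/- Let d be a positive squarefree integer with d ≡ 1 (mod 4), n ≥ 1, and let R = ℤ[√-d]/(2) with σ : R → R the ring endomorphism induced by conjugation σ(a+b√-d) = a-b√-d. Let L be the (n+1)×(n+1) diagonal matrix diag(1,…,1,-1). Then the number of matrices B ∈ M_{n+1}(R) satisfying B·L + L·σ(B)ᵀ = 0 and trace(B) = 0 equals 2^{n²+3n}. -/
open Matrix

/-- The quotient ring `ℤ[√-d]/(m)`. -/
abbrev Rq (d m : ℤ) : Type := Zsqrtd (-d) ⧸ Ideal.span {(m : Zsqrtd (-d))}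

/-- Conjugation `a + b√-d ↦ a - b√-d` descends to the quotient `ℤ[√-d]/(m)`. -/
noncomputable def conjQ (d m : ℤ) : Rq d m →+* Rq d m :=
  Ideal.quotientMap (Ideal.span {(m : Zsqrtd (-d))}) (starRingEnd (Zsqrtd (-d)))
    (by
      rw [Ideal.span_singleton_le_iff_mem, Ideal.mem_comap, map_intCast]
      exact Ideal.mem_span_singleton_self _)

/-- The diagonal matrix `diag(1, …, 1, -1)` of size `n+1`. -/
def Lmat (R : Type*) [Ring R] (n : ℕ) : Matrix (Fin (n + 1)) (Fin (n + 1)) R :=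
  Matrix.diagonal fun i => if i = Fin.last n then -1 else 1

section Aux

variable (d : ℤ)

lemma mem_span_two (x : Zsqrtd (-d)) :
    x ∈ Ideal.span {((2 : ℤ) : Zsqrtd (-d))} ↔ (2 : ℤ) ∣ x.re ∧ (2 : ℤ) ∣ x.im := by
  rw [Ideal.mem_span_singleton, Zsqrtd.intCast_dvd]

lemma conjQ_eq_id : conjQ d 2 = RingHom.id (Rq d 2) := by
  refine RingHom.ext fun x => ?_
  obtain ⟨y, rfl⟩ := Ideal.Quotient.mk_surjective x
  rw [RingHom.id_apply, conjQ, Ideal.quotientMap_mk,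
    Ideal.Quotient.mk_eq_mk_iff_sub_mem, mem_span_two]
  refine ⟨by simp [Zsqrtd.re_sub, starRingEnd_apply, Zsqrtd.re_star], ⟨-y.im, ?_⟩⟩
  simp only [Zsqrtd.im_sub, starRingEnd_apply, Zsqrtd.im_star]
  ring

lemma two_eq_zero : (2 : Rq d 2) = 0 := by
  have h : ((2 : ℤ) : Rq d 2) = 0 := by
    rw [← map_intCast (Ideal.Quotient.mk (Ideal.span {((2 : ℤ) : Zsqrtd (-d))})) 2]
    exact Ideal.Quotient.eq_zero_iff_mem.mpr (Ideal.mem_span_singleton_self _)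
  exact_mod_cast h

lemma Lmat_eq_one (n : ℕ) : Lmat (Rq d 2) n = 1 := by
  have hneg : (-1 : Rq d 2) = 1 := by linear_combination -(two_eq_zero d)
  unfold Lmat
  rw [show (fun i : Fin (n+1) => if i = Fin.last n then (-1 : Rq d 2) else 1) = fun _ => 1
    from funext fun i => by split <;> simp [hneg]]
  exact Matrix.diagonal_one

noncomputable def rqFun : ZMod 2 × ZMod 2 → Rq d 2 :=
  fun p => Ideal.Quotient.mk _ ⟨(p.1.val : ℤ), (p.2.val : ℤ)⟩

lemma rqFun_bijective : Function.Bijective (rqFun d) := by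
  constructor
  · rintro ⟨a, b⟩ ⟨a', b'⟩ h
    simp only [rqFun] at h
    rw [Ideal.Quotient.mk_eq_mk_iff_sub_mem, mem_span_two] at h
    obtain ⟨h1, h2⟩ := h
    simp only [Zsqrtd.re_sub, Zsqrtd.im_sub] at h1 h2
    have ha : a.val = a'.val := by
      have := a.val_lt; have := a'.val_lt; omega
    have hb : b.val = b'.val := by
      have := b.val_lt; have := b'.val_lt; omega
    ext
    · exact ZMod.val_injective 2 ha
    · exact ZMod.val_injective 2 hb
  · intro x
    obtain ⟨y, rfl⟩ := Ideal.Quotient.mk_surjective x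
    refine ⟨((y.re : ZMod 2), (y.im : ZMod 2)), ?_⟩
    simp only [rqFun]
    rw [Ideal.Quotient.mk_eq_mk_iff_sub_mem, mem_span_two]
    constructor
    · simp only [Zsqrtd.re_sub]
      have : (((((y.re : ZMod 2)).val : ℤ) - y.re : ℤ) : ZMod 2) = 0 := by
        push_cast [ZMod.natCast_val, ZMod.intCast_zmod_cast]
        ring
      exact (ZMod.intCast_zmod_eq_zero_iff_dvd _ 2).mp this
    · simp only [Zsqrtd.im_sub]
      have : (((((y.im : ZMod 2)).val : ℤ) - y.im : ℤ) : ZMod 2) = 0 := by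
        push_cast [ZMod.natCast_val, ZMod.intCast_zmod_cast]
        ring
      exact (ZMod.intCast_zmod_eq_zero_iff_dvd _ 2).mp this

lemma finite_rq : Finite (Rq d 2) :=
  Finite.of_surjective _ (rqFun_bijective d).surjective

lemma card_rq : Nat.card (Rq d 2) = 4 := by
  rw [← Nat.card_eq_of_bijective _ (rqFun_bijective d), Nat.card_prod, Nat.card_zmod]

end Aux

section Count

variable {R : Type*} [CommRing R] (n : ℕ)

/-- Parametrization of symmetric traceless matrices. -/
noncomputable def symTracelessEquiv :
    {B : Matrix (Fin (n+1)) (Fin (n+1)) R // Bᵀ = B ∧ B.trace = 0} ≃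
      (({p : Fin (n+1) × Fin (n+1) // p.1 < p.2} → R) × (Fin n → R)) where
  toFun B := (fun p => B.1 p.1.1 p.1.2, fun k => B.1 k.castSucc k.castSucc)
  invFun x := ⟨Matrix.of fun i j =>
      if h : i = j then
        (if h2 : i = Fin.last n then -(∑ k, x.2 k) else x.2 (i.castPred h2))
      else if h3 : i < j then x.1 ⟨(i, j), h3⟩
        else x.1 ⟨(j, i), (not_lt.mp h3).lt_of_ne fun hej => h hej.symm⟩, by
    constructor
    · ext i j
      simp only [Matrix.transpose_apply, Matrix.of_apply]
      rcases lt_trichotomy i j with hij | hij | hij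
      · rw [dif_neg hij.ne', dif_neg (not_lt.mpr hij.le), dif_neg hij.ne, dif_pos hij]
      · subst hij; rfl
      · rw [dif_neg hij.ne, dif_pos hij, dif_neg hij.ne', dif_neg (not_lt.mpr hij.le)]
    · rw [Matrix.trace]
      simp only [Matrix.diag, Matrix.of_apply, dif_pos rfl]
      rw [Fin.sum_univ_castSucc]
      simp [Fin.castPred_castSucc, (Fin.castSucc_lt_last _).ne]⟩
  left_inv := by
    rintro ⟨B, hsym, htr⟩
    ext i j
    simp only [Matrix.of_apply]
    rcases lt_trichotomy i j with hij | hij | hij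
    · rw [dif_neg hij.ne, dif_pos hij]
    · subst hij
      rw [dif_pos rfl]
      by_cases h2 : i = Fin.last n
      · subst h2
        rw [dif_pos rfl]
        have := htr
        rw [Matrix.trace, Fin.sum_univ_castSucc] at this
        simp only [Matrix.diag] at this
        linear_combination -this
      · rw [dif_neg h2]
        simp [Fin.castSucc_castPred]
    · rw [dif_neg hij.ne', dif_neg (not_lt.mpr hij.le)]
      calc B j i = Bᵀ i j := rfl
        _ = B i j := by rw [hsym]
  right_inv := by
    rintro ⟨u, v⟩
    refine Prod.ext (funext fun p => ?_) (funext fun k => ?_)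
    · simp only [Matrix.of_apply]
      rw [dif_neg p.2.ne, dif_pos p.2]
    · simp only [Matrix.of_apply]
      simp [(Fin.castSucc_lt_last k).ne, Fin.castPred_castSucc]

/-- The strict upper triangle of `Fin (n+1)` as a sigma type. -/
def upperEquiv : {p : Fin (n+1) × Fin (n+1) // p.1 < p.2} ≃ Σ j : Fin (n+1), Fin j.val where
  toFun p := ⟨p.1.2, ⟨p.1.1.val, p.2⟩⟩
  invFun s := ⟨(⟨s.2.val, lt_trans s.2.isLt s.1.isLt⟩, s.1), s.2.isLt⟩
  left_inv p := rfl
  right_inv s := rfl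

lemma card_upper : Nat.card {p : Fin (n+1) × Fin (n+1) // p.1 < p.2} * 2 = (n + 1) * n := by
  rw [Nat.card_congr (upperEquiv n), Nat.card_eq_fintype_card, Fintype.card_sigma]
  simp only [Fintype.card_fin]
  rw [Fin.sum_univ_eq_sum_range (fun i => i), Finset.sum_range_id_mul_two]
  simp

end Count

/-- For `d ≡ 1 (mod 4)` squarefree positive, the number of matrices `B` over
`R = ℤ[√-d]/(2)` with `B L + L σ(B)ᵀ = 0` and `tr B = 0` is `2^(n²+3n)`. -/
theorem card_kernel_lie_L (d : ℤ) (hd : 0 < d) (hsf : Squarefree d) (hd4 : d % 4 = 1)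
    (n : ℕ) (hn : 1 ≤ n) :
    Nat.card {B : Matrix (Fin (n + 1)) (Fin (n + 1)) (Rq d 2) //
        B * Lmat (Rq d 2) n + Lmat (Rq d 2) n * (B.map (conjQ d 2))ᵀ = 0 ∧
        B.trace = 0} = 2 ^ (n ^ 2 + 3 * n) := by
  haveI : Finite (Rq d 2) := finite_rq d
  have h2 : (2 : Rq d 2) = 0 := two_eq_zero d
  have hneg : ∀ M : Matrix (Fin (n+1)) (Fin (n+1)) (Rq d 2), -M = M := by
    intro M; ext i j
    simp only [Matrix.neg_apply]
    linear_combination -(M i j) * h2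
  have hcond : ∀ B : Matrix (Fin (n + 1)) (Fin (n + 1)) (Rq d 2),
      (B * Lmat (Rq d 2) n + Lmat (Rq d 2) n * (B.map (conjQ d 2))ᵀ = 0 ∧ B.trace = 0)
        ↔ (Bᵀ = B ∧ B.trace = 0) := by
    intro B
    rw [Lmat_eq_one, conjQ_eq_id, mul_one, one_mul]
    have hmap : B.map (RingHom.id (Rq d 2)) = B := by
      ext i j; simp
    rw [hmap]
    constructor
    · rintro ⟨ha, ht⟩
      refine ⟨?_, ht⟩
      have := eq_neg_of_add_eq_zero_right ha
      rw [hneg] at this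
      exact this
    · rintro ⟨hs, ht⟩
      refine ⟨?_, ht⟩
      rw [hs]
      nth_rewrite 1 [← hneg B]
      exact neg_add_cancel B
  rw [Nat.card_congr ((Equiv.subtypeEquivRight hcond).trans (symTracelessEquiv n)),
    Nat.card_prod, Nat.card_fun, Nat.card_fun, card_rq, Nat.card_eq_fintype_card (α := Fin n),
    Fintype.card_fin]
  obtain ⟨T, hT⟩ : ∃ T, Nat.card {p : Fin (n+1) × Fin (n+1) // p.1 < p.2} = T := ⟨_, rfl⟩
  have hT2 : T * 2 = (n + 1) * n := by rw [← hT]; exact card_upper n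
  rw [hT]
  have : (4 : ℕ) = 2 ^ 2 := rfl
  rw [this, ← pow_mul, ← pow_mul, ← pow_add]
  congr 1
  have : 2 * T = (n + 1) * n := by omega
  rw [this]
  ring
end

section
/- Let d be a positive odd squarefree integer, n ≥ 1, p an odd prime with p ∤ d, and k ≥ 1. Let R = ℤ[√-d]/(p^k) with σ the ring endomorphism induced by conjugation, and let L = diag(1,…,1,-1) of size n+1. Then the number of matrices A ∈ M_{n+1}(R) with A·L·σ(A)ᵀ = L equals p^{k-1}·(p - χ) times the number of such matrices that in addition satisfy det A = 1, where χ = (-d/p) is the Legendre symbol. -/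
open Matrix

/-!
Sending `A` to `(det A, diag(σ(det A), 1, …, 1) · A)` splits `U(L, R)` as `N × SU(L, R)`, where
`N = {u | u σ(u) = 1}`, so the index is `#N`. Writing elements of `ℤ[√-d]/(m)` as pairs over
`ℤ/m`, `N` becomes the conic `x² + d y² = 1` over `ℤ/m`. Over `𝔽_p` a conic `a x² + b y² = 1`
has `p - χ(-ab)` points, by the Jacobi sum `J(χ, χ) = -χ(-1)`. From `p^k` to `p^(k+1)` every
point lifts in exactly `p` ways: the kernel of `ℤ/p^(k+1) → ℤ/p^k` has square zero, so a fibre is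
cut out by a linear equation whose coefficients `2ax, 2by` are not both non-units.
-/

open Finset

section Conic

variable {R : Type*} [CommRing R]

def conic (a b : R) : Set (R × R) := {v | a * v.1 ^ 2 + b * v.2 ^ 2 = 1}

@[simp]
lemma mem_conic {a b : R} {v : R × R} : v ∈ conic a b ↔ a * v.1 ^ 2 + b * v.2 ^ 2 = 1 :=
  Iff.rfl

end Conic

section FiniteField

variable {F : Type*} [Field F] [Fintype F] [DecidableEq F]

lemma card_mul_sq_eq (hF : ringChar F ≠ 2) {a : F} (ha : a ≠ 0) (s : F) :
    (Nat.card {x : F // a * x ^ 2 = s} : ℤ) = quadraticChar F (a * s) + 1 := by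
  have e : {x : F // a * x ^ 2 = s} ≃ {z : F | z ^ 2 = a * s} :=
    (Equiv.mulLeft₀ a ha).subtypeEquiv fun x => by
      show _ ↔ (a * x) ^ 2 = a * s
      rw [mul_pow, sq a, mul_assoc, mul_right_inj' ha]
  rw [Nat.card_congr e, Nat.card_eq_card_toFinset, quadraticChar_card_sqrts hF]

lemma sum_quadraticChar_mul_quadraticChar_one_sub (hF : ringChar F ≠ 2) :
    ∑ s : F, quadraticChar F s * quadraticChar F (1 - s) = -quadraticChar F (-1) := by
  have h := jacobiSum_nontrivial_inv (quadraticChar_ne_one hF)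
  rwa [(quadraticChar_isQuadratic F).inv] at h

theorem card_conic_of_field (hF : ringChar F ≠ 2) {a b : F} (ha : a ≠ 0) (hb : b ≠ 0) :
    (Nat.card (conic a b) : ℤ) = Fintype.card F - quadraticChar F (-(a * b)) := by
  let e : conic a b ≃ Σ s : F, {x : F // a * x ^ 2 = s} × {y : F // b * y ^ 2 = 1 - s} :=
    { toFun v := ⟨a * v.1.1 ^ 2, ⟨v.1.1, rfl⟩, ⟨v.1.2, by linear_combination (mem_conic.1 v.2)⟩⟩
      invFun t := ⟨(t.2.1.1, t.2.2.1), by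
        rw [mem_conic]; linear_combination t.2.1.2 + t.2.2.2⟩
      left_inv v := rfl
      right_inv := by rintro ⟨s, ⟨x, rfl⟩, ⟨y, hy⟩⟩; rfl }
  have hshift : ∑ s : F, quadraticChar F (1 - s) = 0 := by
    rw [← quadraticChar_sum_zero hF]
    exact Equiv.sum_comp (Equiv.subLeft 1) _
  have hcross : ∑ s : F, quadraticChar F (a * s) * quadraticChar F (b * (1 - s))
      = -quadraticChar F (-(a * b)) := by
    simp_rw [map_mul, mul_mul_mul_comm (quadraticChar F a), ← mul_sum,
      sum_quadraticChar_mul_quadraticChar_one_sub hF, neg_eq_neg_one_mul (a * b), map_mul]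
    ring
  rw [Nat.card_congr e, Nat.card_sigma]
  push_cast [Nat.card_prod]
  simp_rw [card_mul_sq_eq hF ha, card_mul_sq_eq hF hb]
  simp only [add_mul, mul_add, mul_one, one_mul, sum_add_distrib, hcross, sum_const, card_univ]
  simp_rw [map_mul, ← mul_sum, hshift, quadraticChar_sum_zero hF]
  ring

end FiniteField

lemma Nat.card_eq_mul_of_card_fiber {α β : Type*} [Finite α] [Fintype β] (f : α → β) {c : ℕ}
    (h : ∀ b, Nat.card {a // f a = b} = c) : Nat.card α = c * Nat.card β := by
  rw [Nat.card_congr (Equiv.sigmaFiberEquiv f).symm, Nat.card_sigma,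
    Finset.sum_congr rfl fun b _ => h b, Finset.sum_const, Finset.card_univ, smul_eq_mul,
    Nat.card_eq_fintype_card, mul_comm]

section SquareZeroLift

variable {R S : Type*} [CommRing R] [CommRing S]

lemma card_linear_eq_card_ideal (I : Ideal R) {c : R} (hc : c ∈ I) {α β : R}
    (h : IsUnit α ∨ IsUnit β) :
    Nat.card {t : I × I // c + α * t.1 + β * t.2 = 0} = Nat.card I := by
  have solve : ∀ {α β : R}, IsUnit α → {t : I × I // c + α * t.1 + β * t.2 = 0} ≃ I :=
    fun {α β} hα =>
    { toFun t := t.1.2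
      invFun δ := ⟨(⟨-(↑hα.unit⁻¹ * (c + β * δ)),
          I.neg_mem (I.mul_mem_left _ (I.add_mem hc (I.mul_mem_left _ δ.2)))⟩, δ), by
        simp only
        rw [mul_neg, ← mul_assoc, hα.mul_val_inv, one_mul]
        ring⟩
      left_inv t := by
        ext
        · have ht : α * t.1.1 = -(c + β * t.1.2) := by linear_combination t.2
          simp only
          rw [← mul_neg, ← ht, ← mul_assoc, hα.val_inv_mul, one_mul]
        · rfl
      right_inv δ := rfl }
  rcases h with hα | hβ
  · exact Nat.card_congr (solve hα)
  · rw [← Nat.card_congr (solve (β := α) hβ)]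
    exact Nat.card_congr <| (Equiv.prodComm I I).subtypeEquiv fun t => by
      simp only [Equiv.prodComm_apply, Prod.fst_swap, Prod.snd_swap, add_right_comm]

lemma isUnit_or_isUnit_of_isNilpotent [IsLocalRing R] {a b x y : R}
    (h : IsNilpotent (a * x ^ 2 + b * y ^ 2 - 1)) : IsUnit (a * x) ∨ IsUnit (b * y) := by
  have hunit := h.isUnit_add_one
  rw [sub_add_cancel] at hunit
  refine (IsLocalRing.isUnit_or_isUnit_of_isUnit_add hunit).imp (fun h => ?_) (fun h => ?_)
  · exact isUnit_of_mul_isUnit_left (by rwa [sq, ← mul_assoc] at h)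
  · exact isUnit_of_mul_isUnit_left (by rwa [sq, ← mul_assoc] at h)

variable (π : R →+* S)

lemma mapsTo_conic (a b : R) : Set.MapsTo (Prod.map π π) (conic a b) (conic (π a) (π b)) :=
  fun v hv => by
    rw [mem_conic] at hv ⊢
    simpa using congrArg π hv

variable {π}

def conicFiberEquiv (hsq : ∀ ε ∈ RingHom.ker π, ε ^ 2 = 0) {a b : R}
    (w : conic (π a) (π b)) {x₀ y₀ : R} (hx : π x₀ = w.1.1) (hy : π y₀ = w.1.2) :
    {v : conic a b // (mapsTo_conic π a b).restrict _ _ _ v = w} ≃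
      {t : RingHom.ker π × RingHom.ker π //
        (a * x₀ ^ 2 + b * y₀ ^ 2 - 1) + 2 * a * x₀ * t.1 + 2 * b * y₀ * t.2 = 0} where
  toFun v :=
    have hx' : v.1.1.1 - x₀ ∈ RingHom.ker π :=
      (RingHom.sub_mem_ker_iff π).2 ((congrArg (fun u => u.1.1) v.2).trans hx.symm)
    have hy' : v.1.1.2 - y₀ ∈ RingHom.ker π :=
      (RingHom.sub_mem_ker_iff π).2 ((congrArg (fun u => u.1.2) v.2).trans hy.symm)
    ⟨(⟨_, hx'⟩, ⟨_, hy'⟩), by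
      linear_combination (mem_conic.1 v.1.2) - a * hsq _ hx' - b * hsq _ hy'⟩
  invFun t := ⟨⟨(x₀ + t.1.1, y₀ + t.1.2), by
      rw [mem_conic]
      linear_combination t.2 + a * hsq _ t.1.1.2 + b * hsq _ t.1.2.2⟩, by
      ext
      · simp [hx, (RingHom.mem_ker).1 t.1.1.2]
      · simp [hy, (RingHom.mem_ker).1 t.1.2.2]⟩
  left_inv v := by ext <;> simp
  right_inv t := by ext <;> simp

theorem card_conic_eq_card_ker_mul [Finite R] [IsLocalRing R] (hπ : Function.Surjective π)
    (hsq : ∀ ε ∈ RingHom.ker π, ε ^ 2 = 0) (h2 : IsUnit (2 : R)) (a b : R) :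
    Nat.card (conic a b) = Nat.card (RingHom.ker π) * Nat.card (conic (π a) (π b)) := by
  have : Finite S := Finite.of_surjective π hπ
  have := Fintype.ofFinite (conic (π a) (π b))
  refine Nat.card_eq_mul_of_card_fiber ((mapsTo_conic π a b).restrict _ _ _) fun w => ?_
  obtain ⟨x₀, hx⟩ := hπ w.1.1
  obtain ⟨y₀, hy⟩ := hπ w.1.2
  have hF : a * x₀ ^ 2 + b * y₀ ^ 2 - 1 ∈ RingHom.ker π := by
    rw [RingHom.mem_ker, map_sub, map_add, map_mul, map_mul, map_pow, map_pow, hx, hy, map_one,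
      sub_eq_zero]
    exact w.2
  rw [Nat.card_congr (conicFiberEquiv hsq w hx hy)]
  refine card_linear_eq_card_ideal _ hF ?_
  simp only [mul_assoc]
  exact (isUnit_or_isUnit_of_isNilpotent ⟨2, hsq _ hF⟩).imp h2.mul h2.mul

end SquareZeroLift

lemma RingHom.card_eq_card_ker_mul {R S : Type*} [CommRing R] [CommRing S] (π : R →+* S)
    (hπ : Function.Surjective π) : Nat.card R = Nat.card (RingHom.ker π) * Nat.card S := by
  rw [Submodule.card_eq_card_quotient_mul_card (RingHom.ker π),
    Nat.card_congr (RingHom.quotientKerEquivOfSurjective hπ).toEquiv]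

lemma ZMod.sq_eq_zero_of_mem_ker_castHom {m n : ℕ} (hmn : m ∣ n) (hnm : n ∣ m ^ 2) {ε : ZMod n}
    (hε : ε ∈ RingHom.ker (ZMod.castHom hmn (ZMod m))) : ε ^ 2 = 0 := by
  rw [RingHom.mem_ker, ZMod.castHom_apply, ← ZMod.intCast_cast,
    ZMod.intCast_zmod_eq_zero_iff_dvd] at hε
  rw [← ZMod.intCast_zmod_cast ε, ← Int.cast_pow, ZMod.intCast_zmod_eq_zero_iff_dvd]
  exact (Int.natCast_dvd_natCast.2 hnm).trans (by push_cast; exact pow_dvd_pow_of_dvd hε 2)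

section ZModPrimePow

variable (p : ℕ) [hp : Fact p.Prime]

instance (n : ℕ) : IsLocalRing (ZMod (p ^ (n + 1))) :=
  have : Fact (1 < p ^ (n + 1)) := ⟨Nat.one_lt_pow n.succ_ne_zero hp.out.one_lt⟩
  IsLocalRing.of_surjective' (PadicInt.toZModPow (n + 1)) (ZMod.ringHom_surjective _)

theorem card_conic_zmod_prime_pow_succ (hp2 : p ≠ 2) {k : ℕ} (hk : 1 ≤ k) (a b : ℤ) :
    Nat.card (conic (a : ZMod (p ^ (k + 1))) b) = p * Nat.card (conic (a : ZMod (p ^ k)) b) := by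
  let π := ZMod.castHom (pow_dvd_pow p k.le_succ) (ZMod (p ^ k))
  have hπ : Function.Surjective π := ZMod.castHom_surjective _
  have hker : Nat.card (RingHom.ker π) = p := by
    have h := π.card_eq_card_ker_mul hπ
    rw [Nat.card_zmod, Nat.card_zmod] at h
    refine Nat.eq_of_mul_eq_mul_left (pow_pos hp.out.pos k) ?_
    rw [mul_comm, ← h, pow_succ]
  have hsq : ∀ ε ∈ RingHom.ker π, ε ^ 2 = 0 := fun ε =>
    ZMod.sq_eq_zero_of_mem_ker_castHom _ (by rw [← pow_mul]; exact pow_dvd_pow p (by omega))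
  have h2 : IsUnit (2 : ZMod (p ^ (k + 1))) := by
    simpa using (ZMod.isUnit_iff_coprime 2 _).2
      (Nat.Coprime.pow_right _ ((Nat.coprime_primes Nat.prime_two hp.out).2 hp2.symm))
  rw [card_conic_eq_card_ker_mul hπ hsq h2, hker, map_intCast, map_intCast]

theorem card_conic_zmod_prime (hp2 : p ≠ 2) {a b : ℤ} (ha : ¬ (p : ℤ) ∣ a)
    (hb : ¬ (p : ℤ) ∣ b) :
    (Nat.card (conic (a : ZMod p) b) : ℤ) = p - legendreSym p (-(a * b)) := by
  rw [← ZMod.intCast_zmod_eq_zero_iff_dvd] at ha hb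
  rw [card_conic_of_field (by rwa [ZMod.ringChar_zmod_n]) ha hb, ZMod.card, legendreSym]
  push_cast
  rfl

theorem card_conic_zmod_prime_pow (hp2 : p ≠ 2) {a b : ℤ} (ha : ¬ (p : ℤ) ∣ a)
    (hb : ¬ (p : ℤ) ∣ b) {k : ℕ} (hk : 1 ≤ k) :
    (Nat.card (conic (a : ZMod (p ^ k)) b) : ℤ)
      = p ^ (k - 1) * (p - legendreSym p (-(a * b))) := by
  induction k, hk using Nat.le_induction with
  | base => rw [pow_one, card_conic_zmod_prime p hp2 ha hb, pow_zero, one_mul]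
  | succ k hk ih =>
    rw [card_conic_zmod_prime_pow_succ p hp2 hk, Nat.cast_mul, ih, ← mul_assoc, ← pow_succ',
      Nat.sub_add_cancel hk, Nat.add_sub_cancel]

end ZModPrimePow

section NormOne

variable (d : ℤ) (m : ℕ)

lemma Rq.mk_eq_mk_iff (z w : ℤ√(-d)) :
    (Ideal.Quotient.mk _ z : Rq d m) = Ideal.Quotient.mk _ w ↔
      (z.re : ZMod m) = w.re ∧ (z.im : ZMod m) = w.im := by
  rw [Ideal.Quotient.eq, Ideal.mem_span_singleton, Zsqrtd.intCast_dvd,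
    ZMod.intCast_eq_intCast_iff_dvd_sub, ZMod.intCast_eq_intCast_iff_dvd_sub]
  simp [dvd_sub_comm]

noncomputable def Rq.ofPair (v : ZMod m × ZMod m) : Rq d m :=
  Ideal.Quotient.mk _ ⟨(v.1.cast : ℤ), (v.2.cast : ℤ)⟩

lemma Rq.ofPair_bijective : Function.Bijective (Rq.ofPair d m) := by
  refine ⟨fun v w h => ?_, fun x => ?_⟩
  · simp only [Rq.ofPair, Rq.mk_eq_mk_iff, ZMod.intCast_zmod_cast] at h
    exact Prod.ext h.1 h.2
  · obtain ⟨z, rfl⟩ := Ideal.Quotient.mk_surjective x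
    exact ⟨(z.re, z.im), by simp [Rq.ofPair, Rq.mk_eq_mk_iff]⟩

lemma Rq.ofPair_mul_conjQ_eq_one_iff (v : ZMod m × ZMod m) :
    Rq.ofPair d m v * conjQ d m (Rq.ofPair d m v) = 1 ↔ v ∈ conic (1 : ZMod m) d := by
  rw [Rq.ofPair, conjQ, Ideal.quotientMap_mk, ← map_mul, starRingEnd_apply,
    ← Zsqrtd.norm_eq_mul_conj, ← map_one (Ideal.Quotient.mk _), Rq.mk_eq_mk_iff,
    Zsqrtd.re_intCast, Zsqrtd.im_intCast, Zsqrtd.re_one, Zsqrtd.im_one, Zsqrtd.norm_def, mem_conic]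
  push_cast [ZMod.intCast_zmod_cast]
  rw [and_iff_left rfl]
  ring_nf

noncomputable def normOneEquivConic :
    {u : Rq d m // u * conjQ d m u = 1} ≃ conic (1 : ZMod m) d :=
  ((Equiv.ofBijective _ (Rq.ofPair_bijective d m)).subtypeEquiv
    fun v => (Rq.ofPair_mul_conjQ_eq_one_iff d m v).symm).symm

end NormOne

section UnitaryGroup

variable {ι R : Type*} [Fintype ι] [CommRing R] (σ : R →+* R)

lemma mul_mem_unitary {L A B : Matrix ι ι R} (hA : A * L * (A.map σ)ᵀ = L)
    (hB : B * L * (B.map σ)ᵀ = L) : (A * B) * L * ((A * B).map σ)ᵀ = L := by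
  rw [Matrix.map_mul, transpose_mul]
  calc A * B * L * ((B.map σ)ᵀ * (A.map σ)ᵀ) = A * (B * L * (B.map σ)ᵀ) * (A.map σ)ᵀ := by
        simp only [Matrix.mul_assoc]
    _ = L := by rw [hB, hA]

variable [DecidableEq ι]

lemma det_mul_apply_det_of_mem_unitary {L A : Matrix ι ι R} (hL : IsUnit L.det)
    (hA : A * L * (A.map σ)ᵀ = L) : A.det * σ A.det = 1 := by
  have h := congrArg det hA
  rw [det_mul, det_mul, det_transpose, ← RingHom.mapMatrix_apply, ← RingHom.map_det,
    mul_right_comm] at h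
  exact hL.mul_eq_right.1 h

lemma diagonal_mulSingle_mem_unitary (i : ι) (l : ι → R) {v : R} (hv : v * σ v = 1) :
    diagonal (Pi.mulSingle i v) * diagonal l * ((diagonal (Pi.mulSingle i v)).map σ)ᵀ
      = diagonal l := by
  rw [diagonal_map (map_zero σ), diagonal_transpose, diagonal_mul_diagonal,
    diagonal_mul_diagonal]
  congr 1
  ext j
  rcases eq_or_ne j i with rfl | hj
  · simp only [Pi.mulSingle_eq_same]
    linear_combination l j * hv
  · simp [hj]

lemma diagonal_mulSingle_mul_diagonal_mulSingle (i : ι) (v w : R) :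
    diagonal (Pi.mulSingle i v) * diagonal (Pi.mulSingle i w)
      = diagonal (Pi.mulSingle i (v * w)) := by
  rw [diagonal_mul_diagonal', ← Pi.mul_def, Pi.mulSingle_mul]

lemma det_diagonal_mulSingle (i : ι) (v : R) : (diagonal (Pi.mulSingle i v)).det = v := by
  rw [det_diagonal, Fintype.prod_pi_mulSingle']

def unitaryEquivNormOneProdSpecial (i : ι) (l : ι → R) (hl : IsUnit (diagonal l).det) :
    {A : Matrix ι ι R // A * diagonal l * (A.map σ)ᵀ = diagonal l} ≃
      {u : R // u * σ u = 1} ×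
        {A : Matrix ι ι R // A * diagonal l * (A.map σ)ᵀ = diagonal l ∧ A.det = 1} where
  toFun A :=
    have hdet := det_mul_apply_det_of_mem_unitary σ hl A.2
    (⟨A.1.det, hdet⟩, ⟨diagonal (Pi.mulSingle i (σ A.1.det)) * A.1,
       mul_mem_unitary σ
         (diagonal_mulSingle_mem_unitary σ i l (by rw [← map_mul, hdet, map_one])) A.2,
       by rw [det_mul, det_diagonal_mulSingle, mul_comm, hdet]⟩)
  invFun uB := ⟨diagonal (Pi.mulSingle i uB.1.1) * uB.2.1,
    mul_mem_unitary σ (diagonal_mulSingle_mem_unitary σ i l uB.1.2) uB.2.2.1⟩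
  left_inv A := Subtype.ext <| by
    simp only
    rw [← Matrix.mul_assoc, diagonal_mulSingle_mul_diagonal_mulSingle,
      det_mul_apply_det_of_mem_unitary σ hl A.2, Pi.mulSingle_one, diagonal_one', Matrix.one_mul]
  right_inv := by
    rintro ⟨⟨u, hu⟩, ⟨B, hB, hBdet⟩⟩
    have hdet : (diagonal (Pi.mulSingle i u) * B).det = u := by
      rw [det_mul, det_diagonal_mulSingle, hBdet, mul_one]
    ext : 2
    · exact hdet
    · simp only
      rw [hdet, ← Matrix.mul_assoc, diagonal_mulSingle_mul_diagonal_mulSingle, mul_comm, hu,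
        Pi.mulSingle_one, diagonal_one', Matrix.one_mul]

end UnitaryGroup

lemma det_Lmat (R : Type*) [CommRing R] (n : ℕ) : (Lmat R n).det = -1 := by
  rw [Lmat, det_diagonal, Fintype.prod_ite_eq']

theorem card_U_eq_index_mul_card_SU_unramified_general (d : ℤ) (n : ℕ) (p : ℕ) [Fact p.Prime] (hp2 : p ≠ 2)
    (hpd : ¬ (p : ℤ) ∣ d) (k : ℕ) (hk : 1 ≤ k) :
    (Nat.card {A : Matrix (Fin (n + 1)) (Fin (n + 1)) (Rq d (p ^ k)) //
        A * Lmat (Rq d (p ^ k)) n * (A.map (conjQ d (p ^ k)))ᵀ = Lmat (Rq d (p ^ k)) n} : ℤ)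
      = p ^ (k - 1) * ((p : ℤ) - legendreSym p (-d)) *
        Nat.card {A : Matrix (Fin (n + 1)) (Fin (n + 1)) (Rq d (p ^ k)) //
          A * Lmat (Rq d (p ^ k)) n * (A.map (conjQ d (p ^ k)))ᵀ = Lmat (Rq d (p ^ k)) n ∧
          A.det = 1} := by
  have hconic := card_conic_zmod_prime_pow p hp2 (a := 1) (b := d)
    (by exact_mod_cast (Fact.out : p.Prime).not_dvd_one) hpd hk
  rw [Int.cast_one, one_mul] at hconic
  have hL : IsUnit (Lmat (Rq d (p ^ k : ℕ)) n).det := by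
    rw [det_Lmat]
    exact isUnit_one.neg
  rw [← Nat.cast_pow p k, Lmat, Nat.card_congr (unitaryEquivNormOneProdSpecial _ 0 _ hL),
    Nat.card_prod, Nat.card_congr (normOneEquivConic d (p ^ k)), Nat.cast_mul, hconic]

/-- Unramified index formula: over `R = ℤ[√-d]/(p^k)` with `p` an odd prime not
dividing `d`, `#U(L,R) = p^(k-1)·(p - (-d/p)) · #SU(L,R)`. -/
theorem card_U_eq_index_mul_card_SU_unramified (d : ℤ) (hd : 0 < d) (hodd : Odd d)
    (hsf : Squarefree d) (n : ℕ) (hn : 1 ≤ n) (p : ℕ) [Fact p.Prime] (hp2 : p ≠ 2)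
    (hpd : ¬ (p : ℤ) ∣ d) (k : ℕ) (hk : 1 ≤ k) :
    (Nat.card {A : Matrix (Fin (n + 1)) (Fin (n + 1)) (Rq d (p ^ k)) //
        A * Lmat (Rq d (p ^ k)) n * (A.map (conjQ d (p ^ k)))ᵀ = Lmat (Rq d (p ^ k)) n} : ℤ)
      = p ^ (k - 1) * ((p : ℤ) - legendreSym p (-d)) *
        Nat.card {A : Matrix (Fin (n + 1)) (Fin (n + 1)) (Rq d (p ^ k)) //
          A * Lmat (Rq d (p ^ k)) n * (A.map (conjQ d (p ^ k)))ᵀ = Lmat (Rq d (p ^ k)) n ∧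
          A.det = 1} :=
  card_U_eq_index_mul_card_SU_unramified_general d n p hp2 hpd k hk
end
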